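/- Let n ≥ 1, let d = 2n and let s₀ = (0, n−1) ∈ ℤ². Then for every i ∈ ℤ/2nℤ, the Kashiwara operator ẽ_i (defined with respect to d and the charge s₀) annihilates both the bipartition 1^{2n}.∅ and the bipartition ∅.1^{2n}: ẽ_i(1^{2n}.∅) = 0 and ẽ_i(∅.1^{2n}) = 0. -/

import Mathlib

open scoped Classical

noncomputable section

/-- A partition: an antitone, eventually zero sequence of natural numbers.
`parts k` is the `(k+1)`-st part `λ_{k+1}`. -/
structure SeqPartition where
  parts : ℕ → ℕ
  antitone' : Antitone parts
  exists_zero : ∃ N, parts N = 0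

namespace SeqPartition

lemma sorted_getD_antitone {l : List ℕ} (h : l.Pairwise (· ≥ ·)) :
    Antitone (fun k => l.getD k 0) := by
  intro i j hij
  simp only
  rcases lt_or_ge j l.length with hj | hj
  · have hi : i < l.length := lt_of_le_of_lt hij hj
    rw [List.getD_eq_getElem l 0 hj, List.getD_eq_getElem l 0 hi]
    rcases eq_or_lt_of_le hij with rfl | hlt
    · exact le_rfl
    · exact List.pairwise_iff_getElem.mp h i j hi hj hlt
  · rw [List.getD_eq_default l 0 hj]
    exact Nat.zero_le _

/-- The partition whose multiset of (nonzero) parts is the multiset of nonzero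
elements of `m`. -/
def ofMul (m : Multiset ℕ) : SeqPartition where
  parts := fun k => ((m.sort (· ≤ ·)).reverse).getD k 0
  antitone' := by
    apply sorted_getD_antitone
    rw [List.pairwise_reverse]
    exact Multiset.pairwise_sort m (· ≤ ·)
  exists_zero := ⟨((m.sort (· ≤ ·)).reverse).length, List.getD_eq_default _ _ le_rfl⟩

/-- The size `|λ|` of a partition: the sum of its parts. -/
def size (p : SeqPartition) : ℕ := ∑ i ∈ Finset.range (Nat.find p.exists_zero), p.parts i

lemma finite_gt (p : SeqPartition) (k : ℕ) : {i : ℕ | k < p.parts i}.Finite := by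
  obtain ⟨N, hN⟩ := p.exists_zero
  apply (Set.finite_Iio N).subset
  intro i hi
  simp only [Set.mem_setOf_eq] at hi
  by_contra hc
  simp only [Set.mem_Iio, not_lt] at hc
  have := p.antitone' hc
  omega

/-- The conjugate (transpose) partition. -/
def conj (p : SeqPartition) : SeqPartition where
  parts := fun k => {i : ℕ | k < p.parts i}.ncard
  antitone' := fun a b hab =>
    Set.ncard_le_ncard (fun i hi => lt_of_le_of_lt hab hi) (p.finite_gt a)
  exists_zero := by
    refine ⟨p.parts 0, ?_⟩
    have h : {i : ℕ | p.parts 0 < p.parts i} = ∅ := by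
      ext i
      simp only [Set.mem_setOf_eq, Set.mem_empty_iff_false, iff_false, not_lt]
      exact p.antitone' (Nat.zero_le i)
    show {i : ℕ | p.parts 0 < p.parts i}.ncard = 0
    rw [h, Set.ncard_empty]

/-- The 180°-rotation of the complement of `p` inside the rectangle with
`rows` rows of length `c`: the partition `(c - p_rows, c - p_{rows-1}, …, c - p₁)`. -/
def rotCompl (c rows : ℕ) (p : SeqPartition) : SeqPartition where
  parts := fun k => if k < rows then c - p.parts (rows - 1 - k) else 0
  antitone' := by
    intro a b hab
    by_cases hb : b < rows
    · have ha : a < rows := lt_of_le_of_lt hab hb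
      simp only [if_pos hb, if_pos ha]
      exact Nat.sub_le_sub_left (p.antitone' (by omega)) c
    · simp only [if_neg hb]
      exact Nat.zero_le _
  exists_zero := ⟨rows, by simp⟩

end SeqPartition

/-- A bipartition: a pair of partitions. -/
abbrev Bipartition := SeqPartition × SeqPartition

/-- The size of a bipartition. -/
def Bipartition.size (l : Bipartition) : ℕ := l.1.size + l.2.size

/-- The bipartition whose components have parts the multisets `a` and `b`. -/
def bip (a b : Multiset ℕ) : Bipartition := (SeqPartition.ofMul a, SeqPartition.ofMul b)

/-- The multiset of parts of the partition `a 1^b` (one part `a`, then `b` parts `1`). -/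
def hook (a b : ℕ) : Multiset ℕ := a ::ₘ Multiset.replicate b 1

/-- The charged β-set of a partition, as a sequence:
`betaSet p s i = λ_{i+1} + s - (i+1) + 1`. -/
def betaSet (p : SeqPartition) (s : ℤ) (i : ℕ) : ℤ := (p.parts i : ℤ) + s - i

/-- The charged symbol of a bipartition with charge `σ`, as a pair of subsets of `ℤ`. -/
def symbolOf (l : Bipartition) (σ : ℤ × ℤ) : Set ℤ × Set ℤ :=
  (Set.range (betaSet l.1 σ.1), Set.range (betaSet l.2 σ.2))

/-- The charge `σ_t`. -/
def sigmaT (t : ℕ) : ℤ × ℤ :=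
  if Even t then ((t : ℤ), -1 - (t : ℤ)) else (-1 - (t : ℤ), (t : ℤ))

/-- The trivial symbol `({0,-1,-2,…},{-1,-2,-3,…})`, the symbol of the empty
bipartition with charge `σ₀ = (0,-1)`. -/
def trivialSymbol : Set ℤ × Set ℤ := ({z : ℤ | z ≤ 0}, {z : ℤ | z ≤ -1})

/-- Removing one `n`-co-hook from the symbol `Λ`, yielding `Λ'`: remove `x+n` from one
row, adjoin `x` to the other row, and exchange the two rows. -/
def CohookStep (n : ℕ) (Λ Λ' : Set ℤ × Set ℤ) : Prop :=
  (∃ x : ℤ, x + n ∈ Λ.1 ∧ x ∉ Λ.2 ∧ Λ' = (Λ.2 ∪ {x}, Λ.1 \ {x + n})) ∨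
  (∃ x : ℤ, x + n ∈ Λ.2 ∧ x ∉ Λ.1 ∧ Λ' = (Λ.2 \ {x + n}, Λ.1 ∪ {x}))

/-- `C` is the `n`-co-core of `Λ`: it is obtained from `Λ` by recursively removing
`n`-co-hooks, and no further `n`-co-hook can be removed. -/
def IsCocore (n : ℕ) (Λ C : Set ℤ × Set ℤ) : Prop :=
  Relation.ReflTransGen (CohookStep n) Λ C ∧ ∀ C', ¬ CohookStep n C C'

/-- Number of entries of the charged β-set of `p` that are `≥ α` (with multiplicity). -/
def betaCountGE (p : SeqPartition) (s α : ℤ) : ℕ := Nat.card {i : ℕ // α ≤ betaSet p s i}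

/-- Number of entries `≥ α`, with multiplicity, of the multiset union of the two rows
of the symbol of `l` with charge `σ`. -/
def symCountGE (l : Bipartition) (σ : ℤ × ℤ) (α : ℤ) : ℕ :=
  betaCountGE l.1 σ.1 α + betaCountGE l.2 σ.2 α

/-- The composition `ϖ_Λ` of the symbol of `l` with charge `σ`: `comp l σ k` is the
`(k+1)`-st largest entry (with multiplicity) of the multiset union of the two rows. -/
def comp (l : Bipartition) (σ : ℤ × ℤ) (k : ℕ) : ℤ :=
  sSup {z : ℤ | k + 1 ≤ symCountGE l σ z}

/-- All partial sums of the composition of the symbol `(l,σ)` are bounded by those of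
`(m,τ)`. -/
def DomLE (l : Bipartition) (σ : ℤ × ℤ) (m : Bipartition) (τ : ℤ × ℤ) : Prop :=
  ∀ j : ℕ, ∑ k ∈ Finset.range j, comp l σ k ≤ ∑ k ∈ Finset.range j, comp m τ k

/-- Strict dominance `Λ ⊲ Λ'` of symbols: the compositions differ and all partial sums
of the first are bounded by those of the second. -/
def DomLT (l : Bipartition) (σ : ℤ × ℤ) (m : Bipartition) (τ : ℤ × ℤ) : Prop :=
  comp l σ ≠ comp m τ ∧ DomLE l σ m τ

/-- A box `(x, y, j)` (0-indexed row `x`, 0-indexed column `y`, component `j`: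
`j = 0` is the first component, `j = 1` the second). -/
abbrev Box := ℕ × ℕ × Fin 2

/-- The component of a bipartition selected by `j : Fin 2`. -/
def Bipartition.partsOf (l : Bipartition) (j : Fin 2) : SeqPartition := if j = 0 then l.1 else l.2

/-- Membership of a box in the Young diagram of a bipartition. -/
def MemY (l : Bipartition) (b : Box) : Prop := b.2.1 < (l.partsOf b.2.2).parts b.1

/-- The entry of the charge `σ` corresponding to component `j`. -/
def chargeOf (σ : ℤ × ℤ) (j : Fin 2) : ℤ := if j = 0 then σ.1 else σ.2

/-- The charged content `co^σ(b) = y - x + σ_j` of a box. -/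
def content (σ : ℤ × ℤ) (b : Box) : ℤ := (b.2.1 : ℤ) - (b.1 : ℤ) + chargeOf σ b.2.2

/-- `j(b) ∈ {1,2}`: the component of a box, numbered 1 or 2. -/
def jval (b : Box) : ℕ := (b.2.2 : ℕ) + 1

/-- The counting function of the Dunkl–Griffeth order. -/
def dgCount (l : Bipartition) (s : ℤ × ℤ) (d : ℕ) (α : ℝ) (j : ℕ) : ℕ :=
  Nat.card {b : Box // MemY l b ∧
    (α < (content s b : ℝ) - (jval b : ℝ) * (d : ℝ) / 2 ∨
      ((content s b : ℝ) - (jval b : ℝ) * (d : ℝ) / 2 = α ∧ jval b ≤ j))}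

/-- The Dunkl–Griffeth order `λ ⪯_s μ` (with respect to `d`). -/
def DGLE (l m : Bipartition) (s : ℤ × ℤ) (d : ℕ) : Prop :=
  ∀ (α : ℝ), ∀ j ∈ ({1, 2} : Set ℕ), dgCount l s d α j ≤ dgCount m s d α j

/-- A box of the extended Young diagram: rows are infinite to the left, so the column
coordinate is an integer.  `(x, y, j)` is the box in (0-indexed) row `x`, with integer
column coordinate `y` (`y = 0` is the first column), in component `j`. -/
abbrev ExtBox := ℕ × ℤ × Fin 2

/-- Membership in the extended Young diagram of a bipartition. -/
def MemExtY (l : Bipartition) (b : ExtBox) : Prop :=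
  b.2.1 < ((l.partsOf b.2.2).parts b.1 : ℤ)

/-- The charged content of an extended box. -/
def contentExt (σ : ℤ × ℤ) (b : ExtBox) : ℤ := b.2.1 - (b.1 : ℤ) + chargeOf σ b.2.2

/-- `b` is a removable box of the bipartition `l`. -/
def Removable (l : Bipartition) (b : Box) : Prop :=
  (l.partsOf b.2.2).parts b.1 = b.2.1 + 1 ∧ (l.partsOf b.2.2).parts (b.1 + 1) ≤ b.2.1

/-- `b` is an addable box of the bipartition `l`. -/
def Addable (l : Bipartition) (b : Box) : Prop :=
  (l.partsOf b.2.2).parts b.1 = b.2.1 ∧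
    (b.1 = 0 ∨ b.2.1 + 1 ≤ (l.partsOf b.2.2).parts (b.1 - 1))

/-- The order in which boxes are listed in the `i`-word: increasing charged content,
a component-2 box preceding a component-1 box of equal charged content. -/
def BoxLT (σ : ℤ × ℤ) (b b' : Box) : Prop :=
  content σ b < content σ b' ∨
    (content σ b = content σ b' ∧ b.2.2 = 1 ∧ b'.2.2 = 0)

/-- `L` is the list of boxes underlying the `i`-word of `(l, σ)` with respect to `d`:
it lists, in increasing order, exactly the addable and removable boxes of `l` whose
charged content is congruent to `i` modulo `d`. -/
def IsIWord (l : Bipartition) (σ : ℤ × ℤ) (d : ℕ) (i : ZMod d) (L : List Box) : Prop :=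
  L.Pairwise (BoxLT σ) ∧
    ∀ b : Box, b ∈ L ↔ ((Addable l b ∨ Removable l b) ∧ ((content σ b : ZMod d) = i))

/-- The sign of a box in the `i`-word: `true` (`+`) for addable, `false` (`−`) for
removable boxes. -/
def signOf (l : Bipartition) (b : Box) : Bool := if Addable l b then true else false

/-- One reduction step on words: delete an adjacent pair `−+`. -/
def RedStep (w w' : List Bool) : Prop :=
  ∃ u v : List Bool, w = u ++ false :: true :: v ∧ w' = u ++ v

/-- `ẽ_i l = 0`: the reduced `i`-word of `(l, σ)` contains no `−`, i.e. the `i`-word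
reduces to a word consisting only of `+`'s. -/
def AnnihilatedE (l : Bipartition) (σ : ℤ × ℤ) (d : ℕ) (i : ZMod d) : Prop :=
  ∃ L : List Box, IsIWord l σ d i L ∧
    ∃ a : ℕ, Relation.ReflTransGen RedStep (L.map (signOf l)) (List.replicate a true)

/-- `q` is obtained from the partition `p` by adding one box. -/
def PCovers (p q : SeqPartition) : Prop :=
  ∃ x : ℕ, q.parts x = p.parts x + 1 ∧ ∀ y : ℕ, y ≠ x → q.parts y = p.parts y

/-- `m` is obtained from the bipartition `l` by adding one box to its Young diagram. -/
def BipCovers (l m : Bipartition) : Prop :=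
  (PCovers l.1 m.1 ∧ m.2 = l.2) ∨ (m.1 = l.1 ∧ PCovers l.2 m.2)

/-- `A(l) = Σ_μ μ`, the sum over all bipartitions obtained from `l` by adding one box,
as an element of the group of `ℤ`-valued functions on bipartitions. -/
def addB (l : Bipartition) : Bipartition → ℤ := fun m => if BipCovers l m then 1 else 0

/-- The projection `π_S` onto the span of the bipartitions lying in `S`. -/
def projS (S : Set Bipartition) (f : Bipartition → ℤ) : Bipartition → ℤ :=
  fun m => if m ∈ S then f m else 0

/-- The basis element of `ℤ[BP]` corresponding to a bipartition. -/
def deltaB (l : Bipartition) : Bipartition → ℤ := fun m => if m = l then 1 else 0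

/-- The bipartitions of `2n` labelling the principal-series unipotent characters in
the principal `Φ_{2n}`-block. -/
def PS (n : ℕ) : Set Bipartition :=
  {l | (∃ i j : ℕ, 0 < i ∧ i < n ∧ j ≤ n ∧
          l = bip (hook (n - i) j) (hook (n - j + 1) (i - 1))) ∨
       (∃ j : ℕ, j < 2 * n ∧ l = bip (hook (2 * n - j) j) 0) ∨
       (∃ i : ℕ, 0 < i ∧ i ≤ 2 * n ∧ l = bip 0 (hook (2 * n - i + 1) (i - 1)))}

/-- The bipartitions of `2n-2` labelling the `B₂`-series unipotent characters in the
principal `Φ_{2n}`-block: `2^i 1^{j-i-1} . (n-i-1)(n-j)` for `0 ≤ i < j ≤ n`. -/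
def LB2 (n : ℕ) : Set Bipartition :=
  {l | ∃ i j : ℕ, i < j ∧ j ≤ n ∧
        l = bip (Multiset.replicate i 2 + Multiset.replicate (j - i - 1) 1)
                {n - i - 1, n - j}}

/-- The bipartitions of `2n-6` labelling the `B₆`-series unipotent characters in the
principal `Φ_{2n}`-block: `(n-i-2)(n-j-1) . 2^{i-1} 1^{j-i-1}` for `0 < i < j < n`. -/
def LB6 (n : ℕ) : Set Bipartition :=
  {l | ∃ i j : ℕ, 0 < i ∧ i < j ∧ j < n ∧
        l = bip {n - i - 2, n - j - 1}
                (Multiset.replicate (i - 1) 2 + Multiset.replicate (j - i - 1) 1)}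

end

/-!
A column `1^m` sitting in component `c` of a bipartition has exactly one removable box, its
bottom box, of charged content `s_c - m + 1`; the box addable to the right of its top box has
charged content `s_c + 1`. When `d ∣ m` these two boxes have the same residue, so in the
`i`-word the only `−` is followed by a `+` and cancels against it; for every other residue the
`i`-word contains no `−` at all. Here `d = m = 2n`.

That the `i`-word exists at all uses that a bipartition has finitely many addable and
removable boxes and that, within one component, no two of them share a diagonal, so that
`BoxLT` is a strict total order on them.
-/

def boxKey (σ : ℤ × ℤ) (b : Box) : ℤ := 2 * content σ b + if b.2.2 = 0 then 1 else 0

lemma boxLT_iff_boxKey_lt {σ : ℤ × ℤ} {b b' : Box} :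
    BoxLT σ b b' ↔ boxKey σ b < boxKey σ b' := by
  unfold BoxLT boxKey
  split_ifs <;> omega

lemma not_addable_of_removable {l : Bipartition} {b : Box} (h : Removable l b) :
    ¬ Addable l b := fun h' => by
  have := h.1.symm.trans h'.1
  omega

lemma signOf_eq_true_iff {l : Bipartition} {b : Box} : signOf l b = true ↔ Addable l b := by
  simp [signOf]

lemma eq_of_content_eq {l : Bipartition} {σ : ℤ × ℤ} {b b' : Box}
    (hb : Addable l b ∨ Removable l b) (hb' : Addable l b' ∨ Removable l b')
    (hj : b.2.2 = b'.2.2) (hc : content σ b = content σ b') : b = b' := by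
  obtain ⟨x, y, j⟩ := b
  obtain ⟨x', y', j'⟩ := b'
  simp only at hj
  subst hj
  simp only [content, add_left_inj] at hc
  have mono := (l.partsOf j).antitone'
  unfold Addable Removable at hb hb'
  simp only at hb hb'
  rcases lt_trichotomy x x' with h | rfl | h
  · have h1 := mono (show x + 1 ≤ x' by omega)
    have h2 := mono (show x ≤ x + 1 by omega)
    omega
  · obtain rfl : y = y' := by omega
    rfl
  · have h1 := mono (show x' + 1 ≤ x by omega)
    have h2 := mono (show x' ≤ x' + 1 by omega)
    omega

lemma boxKey_injOn (l : Bipartition) (σ : ℤ × ℤ) :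
    Set.InjOn (boxKey σ) {b | Addable l b ∨ Removable l b} := by
  intro b hb b' hb' h
  have hj : b.2.2 = b'.2.2 := by
    unfold boxKey at h
    split_ifs at h <;> omega
  exact eq_of_content_eq (σ := σ) hb hb' hj (by unfold boxKey at h; rw [hj] at h; omega)

lemma finite_addable_or_removable (l : Bipartition) :
    {b : Box | Addable l b ∨ Removable l b}.Finite := by
  obtain ⟨N₁, hN₁⟩ := l.1.exists_zero
  obtain ⟨N₂, hN₂⟩ := l.2.exists_zero
  have hN : ∀ j x, N₁ + N₂ ≤ x → (l.partsOf j).parts x = 0 := by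
    intro j x hx
    unfold Bipartition.partsOf
    split_ifs
    · have := l.1.antitone' (show N₁ ≤ x by omega)
      omega
    · have := l.2.antitone' (show N₂ ≤ x by omega)
      omega
  have hM : ∀ j x, (l.partsOf j).parts x ≤ l.1.parts 0 + l.2.parts 0 := by
    intro j x
    unfold Bipartition.partsOf
    split_ifs
    · have := l.1.antitone' (Nat.zero_le x)
      omega
    · have := l.2.antitone' (Nat.zero_le x)
      omega
  refine ((Set.finite_Iic (N₁ + N₂)).prod
    ((Set.finite_Iic (l.1.parts 0 + l.2.parts 0)).prod Set.finite_univ)).subset ?_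
  rintro ⟨x, y, j⟩ (hb : Addable l (x, y, j) ∨ Removable l (x, y, j))
  unfold Addable Removable at hb
  dsimp only at hb
  have := hN j x
  have := hN j (x - 1)
  have := hM j x
  simp only [Set.mem_prod, Set.mem_Iic, Set.mem_univ, and_true]
  omega

lemma exists_isIWord (l : Bipartition) (σ : ℤ × ℤ) (d : ℕ) (i : ZMod d) :
    ∃ L, IsIWord l σ d i L := by
  set S := {b : Box | (Addable l b ∨ Removable l b) ∧ (content σ b : ZMod d) = i}
  have hS : S.Finite := (finite_addable_or_removable l).subset fun b hb => hb.1
  set L := hS.toFinset.toList.mergeSort fun b b' => decide (boxKey σ b ≤ boxKey σ b')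
  have hmem : ∀ b, b ∈ L ↔ b ∈ S := by simp [L]
  have hle : L.Pairwise fun b b' => decide (boxKey σ b ≤ boxKey σ b') :=
    List.pairwise_mergeSort (fun _ _ _ h h' => by simp only [decide_eq_true_eq] at *; omega)
      (fun _ _ => by simp only [Bool.or_eq_true, decide_eq_true_eq]; omega) _
  have hnodup : L.Nodup := (List.mergeSort_perm _ _).nodup_iff.mpr hS.toFinset.nodup_toList
  refine ⟨L, (hle.and hnodup).imp_of_mem fun hb hb' ⟨h, hne⟩ => ?_, hmem⟩
  rw [boxLT_iff_boxKey_lt]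
  have := mt (boxKey_injOn l σ ((hmem _).mp hb).1 ((hmem _).mp hb').1) hne
  simp only [decide_eq_true_eq] at h
  omega

lemma reflTransGen_redStep_replicate (a b : ℕ) :
    Relation.ReflTransGen RedStep (List.replicate a true ++ false :: List.replicate (b + 1) true)
      (List.replicate (a + b) true) :=
  .single ⟨_, _, rfl, List.replicate_append_replicate.symm⟩

lemma annihilatedE_of_removable {l : Bipartition} {σ : ℤ × ℤ} {d : ℕ} {i : ZMod d}
    (huniq : ∀ r r', Removable l r → Removable l r' → (content σ r : ZMod d) = i →
      (content σ r' : ZMod d) = i → r = r')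
    (hdom : ∀ r, Removable l r → (content σ r : ZMod d) = i →
      ∃ a, Addable l a ∧ (content σ a : ZMod d) = i ∧ BoxLT σ r a) :
    AnnihilatedE l σ d i := by
  obtain ⟨L, hsort, hmem⟩ := exists_isIWord l σ d i
  refine ⟨L, ⟨hsort, hmem⟩, ?_⟩
  by_cases hrem : ∃ r ∈ L, Removable l r
  · obtain ⟨r, hrL, hr⟩ := hrem
    have hri := ((hmem r).mp hrL).2
    have hsign : ∀ b ∈ L, b ≠ r → signOf l b = true := fun b hb hne =>
      signOf_eq_true_iff.mpr <| ((hmem b).mp hb).1.resolve_right fun hb' =>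
        hne (huniq _ _ hb' hr ((hmem b).mp hb).2 hri)
    obtain ⟨a, ha, hai, hra⟩ := hdom r hr hri
    obtain ⟨L₁, L₂, rfl⟩ := List.append_of_mem hrL
    obtain ⟨hsort₁, hsort₂, hsort₁₂⟩ := List.pairwise_append.mp hsort
    have hbefore : ∀ b ∈ L₁, boxKey σ b < boxKey σ r := fun b hb =>
      boxLT_iff_boxKey_lt.mp (hsort₁₂ b hb r List.mem_cons_self)
    have hafter : ∀ b ∈ L₂, boxKey σ r < boxKey σ b := fun b hb =>
      boxLT_iff_boxKey_lt.mp (List.rel_of_pairwise_cons hsort₂ hb)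
    have haL₂ : a ∈ L₂ := by
      rcases List.mem_append.mp ((hmem a).mpr ⟨Or.inl ha, hai⟩) with ha₁ | ha₂
      · have := hbefore a ha₁
        have := boxLT_iff_boxKey_lt.mp hra
        omega
      · exact (List.mem_cons.mp ha₂).resolve_left fun h => not_addable_of_removable hr (h ▸ ha)
    obtain ⟨c, L₂, rfl⟩ := List.exists_cons_of_ne_nil (List.ne_nil_of_mem haL₂)
    have h₁ : L₁.map (signOf l) = List.replicate L₁.length true :=
      List.map_eq_replicate_iff.mpr fun b hb =>
        hsign b (List.mem_append_left _ hb) fun h => (hbefore b hb).ne (h ▸ rfl)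
    have h₂ : (c :: L₂).map (signOf l) = List.replicate (L₂.length + 1) true :=
      List.map_eq_replicate_iff.mpr fun b hb =>
        hsign b (List.mem_append_right _ (List.mem_cons_of_mem _ hb)) fun h =>
          (hafter b hb).ne' (h ▸ rfl)
    have hr : signOf l r = false := by simpa [signOf] using not_addable_of_removable hr
    refine ⟨L₁.length + L₂.length, ?_⟩
    rw [List.map_append, List.map_cons, h₁, h₂, hr]
    exact reflTransGen_redStep_replicate _ _
  · have hall : ∀ b ∈ L, signOf l b = true := fun b hb =>
      signOf_eq_true_iff.mpr <| ((hmem b).mp hb).1.resolve_right fun h => hrem ⟨b, hb, h⟩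
    exact ⟨L.length, by rw [List.map_eq_replicate_iff.mpr hall]⟩

def IsColumn (l : Bipartition) (c : Fin 2) (m : ℕ) : Prop :=
  ∀ j k, (l.partsOf j).parts k = if j = c ∧ k < m then 1 else 0

lemma eq_of_removable_of_column {l : Bipartition} {c : Fin 2} {m : ℕ}
    (hl : IsColumn l c m) {b : Box} (hb : Removable l b) : 0 < m ∧ b = (m - 1, 0, c) := by
  obtain ⟨x, y, j⟩ := b
  obtain ⟨h₁, h₂⟩ : (l.partsOf j).parts x = y + 1 ∧ (l.partsOf j).parts (x + 1) ≤ y := hb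
  rw [hl] at h₁ h₂
  simp only [Prod.mk.injEq]
  refine ⟨?_, ?_, ?_, ?_⟩ <;> split_ifs at h₁ h₂ <;> omega

lemma addable_of_column {l : Bipartition} {c : Fin 2} {m : ℕ}
    (hl : IsColumn l c m) (hm : 0 < m) : Addable l (0, 1, c) :=
  ⟨(hl c 0).trans (if_pos ⟨rfl, hm⟩), Or.inl rfl⟩

lemma content_top_eq_content_bottom_add (σ : ℤ × ℤ) (c : Fin 2) {m : ℕ} (hm : 0 < m) :
    content σ (0, 1, c) = content σ (m - 1, 0, c) + m := by
  simp only [content]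
  push_cast [Nat.cast_sub hm]
  ring

lemma annihilatedE_of_column {l : Bipartition} {c : Fin 2} {m d : ℕ}
    (hl : IsColumn l c m) (hd : d ∣ m) (σ : ℤ × ℤ) (i : ZMod d) :
    AnnihilatedE l σ d i := by
  refine annihilatedE_of_removable
    (fun r r' hr hr' _ _ => ((eq_of_removable_of_column hl hr).2).trans
      (eq_of_removable_of_column hl hr').2.symm) fun r hr hri => ?_
  obtain ⟨hm, rfl⟩ := eq_of_removable_of_column hl hr
  have hcontent := content_top_eq_content_bottom_add σ c hm
  refine ⟨(0, 1, c), addable_of_column hl hm, ?_, Or.inl (by omega)⟩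
  rw [hcontent, Int.cast_add, Int.cast_natCast, (ZMod.natCast_eq_zero_iff m d).mpr hd,
    add_zero, hri]

lemma parts_ofMul_replicate_one (m k : ℕ) :
    (SeqPartition.ofMul (Multiset.replicate m 1)).parts k = if k < m then 1 else 0 := by
  have hsort : (Multiset.replicate m 1).sort (· ≤ ·) = List.replicate m 1 :=
    List.eq_replicate_iff.mpr
      ⟨by simp, fun _ hb => Multiset.eq_of_mem_replicate (by simpa using hb)⟩
  unfold SeqPartition.ofMul
  simp only [hsort, List.reverse_replicate]
  split_ifs with h
  · rw [List.getD_eq_getElem _ 0 (by simpa using h), List.getElem_replicate]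
  · rw [List.getD_eq_default _ _ (by simpa using h)]

lemma parts_ofMul_zero (k : ℕ) : (SeqPartition.ofMul 0).parts k = 0 := by
  simpa using parts_ofMul_replicate_one 0 k

lemma isColumn_bip_replicate_zero (m : ℕ) : IsColumn (bip (Multiset.replicate m 1) 0) 0 m := by
  intro j k
  fin_cases j <;> simp [Bipartition.partsOf, bip, parts_ofMul_replicate_one, parts_ofMul_zero]

lemma isColumn_bip_zero_replicate (m : ℕ) : IsColumn (bip 0 (Multiset.replicate m 1)) 1 m := by
  intro j k
  fin_cases j <;> simp [Bipartition.partsOf, bip, parts_ofMul_replicate_one, parts_ofMul_zero]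

theorem decomposition_numbers_stmt9_general (n : ℕ) (i : ZMod (2 * n)) :
    AnnihilatedE (bip (Multiset.replicate (2 * n) 1) 0) (0, (n : ℤ) - 1) (2 * n) i ∧
    AnnihilatedE (bip 0 (Multiset.replicate (2 * n) 1)) (0, (n : ℤ) - 1) (2 * n) i :=
  ⟨annihilatedE_of_column (isColumn_bip_replicate_zero _) dvd_rfl _ i,
    annihilatedE_of_column (isColumn_bip_zero_replicate _) dvd_rfl _ i⟩

/-- With `d = 2n` and charge `s₀ = (0, n-1)`, every Kashiwara operator
`ẽ_i` annihilates the bipartitions `1^{2n}.∅` and `∅.1^{2n}`. -/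
theorem decomposition_numbers_stmt9 (n : ℕ) (hn : 1 ≤ n) (i : ZMod (2 * n)) :
    AnnihilatedE (bip (Multiset.replicate (2 * n) 1) 0) (0, (n : ℤ) - 1) (2 * n) i ∧
    AnnihilatedE (bip 0 (Multiset.replicate (2 * n) 1)) (0, (n : ℤ) - 1) (2 * n) i :=
  decomposition_numbers_stmt9_general n i
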